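/- arXiv:0801.0621 — 3 statements merged into one kernel-verified Lean document; each statement's English description precedes it below -/
import Mathlib

section
/- Let the notation be as in the context. Then: (i) the subspace Span{A^i ⊗ E*_j | 0 ≤ i < j ≤ d} ⊗ D of D ⊗ D* ⊗ D is the direct sum over t = 0, 1, ..., d of the subspaces Span{A^i | 0 ≤ i < t} ⊗ Kτ*_t(A*) ⊗ D; (ii) the subspace D ⊗ Span{E*_j ⊗ A^i | 0 ≤ i < j ≤ d} is the direct sum over t = 0, 1, ..., d of the subspaces D ⊗ Kτ*_t(A*) ⊗ Span{A^i | 0 ≤ i < t}; (iii) the subspace Span{E_i ⊗ (A*)^t ⊗ E_j | 0 ≤ i, j, t ≤ d, t < |i − j|} is the direct sum over t = 0, 1, ..., d of the subspaces Span{E_i ⊗ τ*_t(A*) ⊗ E_j | 0 ≤ i, j ≤ d, t < |i − j|}. -/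
open Module Polynomial TensorProduct
open Fin.NatCast

set_option synthInstance.maxHeartbeats 1000000
set_option maxHeartbeats 1000000

noncomputable section

/-- A tridiagonal system on `V`: a tridiagonal pair `A, Astar` together with
orderings `θ, θstar` of their eigenvalues whose eigenspace orderings are standard,
and the corresponding primitive idempotents `E, Estar`. -/
structure TDSystem (K : Type*) (V : Type*) [Field K] [AddCommGroup V] [Module K V] where
  d : ℕ
  A : Module.End K V
  Astar : Module.End K V
  θ : Fin (d+1) → K
  θstar : Fin (d+1) → K
  E : Fin (d+1) → Module.End K V
  Estar : Fin (d+1) → Module.End K V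
  theta_inj : Function.Injective θ
  thetastar_inj : Function.Injective θstar
  eig_ne_bot : ∀ i, A.eigenspace (θ i) ≠ ⊥
  eigstar_ne_bot : ∀ i, Astar.eigenspace (θstar i) ≠ ⊥
  sup_eig : (⨆ i, A.eigenspace (θ i)) = ⊤
  sup_eigstar : (⨆ i, Astar.eigenspace (θstar i)) = ⊤
  tridiag : ∀ i : Fin (d+1), ∀ v ∈ A.eigenspace (θ i),
      Astar v ∈ ⨆ j ∈ {j : Fin (d+1) | i.1 ≤ j.1 + 1 ∧ j.1 ≤ i.1 + 1},
        A.eigenspace (θ j)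
  tridiagstar : ∀ i : Fin (d+1), ∀ v ∈ Astar.eigenspace (θstar i),
      A v ∈ ⨆ j ∈ {j : Fin (d+1) | i.1 ≤ j.1 + 1 ∧ j.1 ≤ i.1 + 1},
        Astar.eigenspace (θstar j)
  irred : ∀ W : Submodule K V, (∀ v ∈ W, A v ∈ W) → (∀ v ∈ W, Astar v ∈ W) →
      W = ⊥ ∨ W = ⊤
  E_on_eig : ∀ i, ∀ v ∈ A.eigenspace (θ i), E i v = v
  E_off_eig : ∀ i j, j ≠ i → ∀ v ∈ A.eigenspace (θ j), E i v = 0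
  Estar_on_eig : ∀ i, ∀ v ∈ Astar.eigenspace (θstar i), Estar i v = v
  Estar_off_eig : ∀ i j, j ≠ i → ∀ v ∈ Astar.eigenspace (θstar j), Estar i v = 0
  E_mem_adjoin : ∀ i, E i ∈ Algebra.adjoin K {A}
  Estar_mem_adjoin : ∀ i, Estar i ∈ Algebra.adjoin K {Astar}

namespace TDSystem

variable {K V : Type*} [Field K] [AddCommGroup V] [Module K V] (S : TDSystem K V)

/-- The subalgebra `D` of `End(V)` generated by `A`. -/
def Dalg : Subalgebra K (Module.End K V) := Algebra.adjoin K {S.A}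

/-- The subalgebra `D*` of `End(V)` generated by `Astar`. -/
def DstarAlg : Subalgebra K (Module.End K V) := Algebra.adjoin K {S.Astar}

/-- `A` as an element of `D`. -/
def a : S.Dalg := ⟨S.A, Algebra.self_mem_adjoin_singleton K S.A⟩

/-- `Astar` as an element of `D*`. -/
def astar : S.DstarAlg := ⟨S.Astar, Algebra.self_mem_adjoin_singleton K S.Astar⟩

/-- `E i` as an element of `D`. -/
def Eelt (i : Fin (S.d+1)) : S.Dalg := ⟨S.E i, S.E_mem_adjoin i⟩

/-- `Estar i` as an element of `D*`. -/
def EstarElt (i : Fin (S.d+1)) : S.DstarAlg := ⟨S.Estar i, S.Estar_mem_adjoin i⟩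

/-- `τ_i = (λ−θ_0)(λ−θ_1)⋯(λ−θ_{i−1})`. -/
def tau (i : ℕ) : Polynomial K := ∏ h ∈ Finset.range i, (X - C (S.θ h))

/-- `η_i = (λ−θ_d)(λ−θ_{d−1})⋯(λ−θ_{d−i+1})`. -/
def eta (i : ℕ) : Polynomial K := ∏ h ∈ Finset.range i, (X - C (S.θ ((S.d - h : ℕ))))

/-- `τ*_i = (λ−θ*_0)(λ−θ*_1)⋯(λ−θ*_{i−1})`. -/
def tauStar (i : ℕ) : Polynomial K := ∏ h ∈ Finset.range i, (X - C (S.θstar h))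

/-- `η*_i = (λ−θ*_d)(λ−θ*_{d−1})⋯(λ−θ*_{d−i+1})`. -/
def etaStar (i : ℕ) : Polynomial K := ∏ h ∈ Finset.range i, (X - C (S.θstar ((S.d - h : ℕ))))

/-- The triple tensor product `D ⊗ D* ⊗ D` over `K`. -/
abbrev TT := (↥S.Dalg) ⊗[K] (↥S.DstarAlg) ⊗[K] (↥S.Dalg)

/-- `τ*_t(A*)` as an element of `D*`. -/
def tauStarA (t : ℕ) : S.DstarAlg := Polynomial.aeval S.astar (S.tauStar t)

/-- The subspace `Span{A^i ⊗ E*_j | 0 ≤ i < j ≤ d} ⊗ D` of `D ⊗ D* ⊗ D`. -/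
def Lspace : Submodule K S.TT :=
  Submodule.span K {x | ∃ (i : ℕ) (j : Fin (S.d+1)) (Z : S.Dalg),
    i < j.1 ∧ x = (S.a ^ i) ⊗ₜ[K] (S.EstarElt j) ⊗ₜ[K] Z}

/-- The subspace `D ⊗ Span{E*_j ⊗ A^i | 0 ≤ i < j ≤ d}` of `D ⊗ D* ⊗ D`. -/
def Rright : Submodule K S.TT :=
  Submodule.span K {x | ∃ (X : S.Dalg) (i : ℕ) (j : Fin (S.d+1)),
    i < j.1 ∧ x = X ⊗ₜ[K] (S.EstarElt j) ⊗ₜ[K] (S.a ^ i)}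

/-- The subspace `Span{E_i ⊗ (A*)^t ⊗ E_j | 0 ≤ i,j,t ≤ d, t < |i−j|}`. -/
def Mspace : Submodule K S.TT :=
  Submodule.span K {x | ∃ (i j : Fin (S.d+1)) (t : ℕ),
    t ≤ S.d ∧ t < Nat.dist i.1 j.1 ∧ x = (S.Eelt i) ⊗ₜ[K] (S.astar ^ t) ⊗ₜ[K] (S.Eelt j)}

/-- The subspace `R` of `D ⊗ D* ⊗ D`. -/
def Rspace : Submodule K S.TT := S.Lspace ⊔ S.Rright ⊔ S.Mspace

/-- The subspace `D ⊗ Kτ*_t(A*) ⊗ D` of `D ⊗ D* ⊗ D`. -/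
def middleSub (t : ℕ) : Submodule K S.TT :=
  Submodule.span K {x | ∃ (X Z : S.Dalg), x = X ⊗ₜ[K] (S.tauStarA t) ⊗ₜ[K] Z}

/-- The subspace `R_t = R ∩ (D ⊗ Kτ*_t(A*) ⊗ D)`. -/
def Rt (t : ℕ) : Submodule K S.TT := S.Rspace ⊓ S.middleSub t

/-- The subspace `Span{A^i | 0 ≤ i < t} ⊗ Kτ*_t(A*) ⊗ D`. -/
def Lt (t : ℕ) : Submodule K S.TT :=
  Submodule.span K {x | ∃ (i : ℕ) (Z : S.Dalg),
    i < t ∧ x = (S.a ^ i) ⊗ₜ[K] (S.tauStarA t) ⊗ₜ[K] Z}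

/-- The subspace `D ⊗ Kτ*_t(A*) ⊗ Span{A^i | 0 ≤ i < t}`. -/
def Rrt (t : ℕ) : Submodule K S.TT :=
  Submodule.span K {x | ∃ (X : S.Dalg) (i : ℕ),
    i < t ∧ x = X ⊗ₜ[K] (S.tauStarA t) ⊗ₜ[K] (S.a ^ i)}

/-- The subspace `Span{E_i ⊗ τ*_t(A*) ⊗ E_j | 0 ≤ i,j ≤ d, t < |i−j|}`. -/
def Mt (t : ℕ) : Submodule K S.TT :=
  Submodule.span K {x | ∃ (i j : Fin (S.d+1)),
    t < Nat.dist i.1 j.1 ∧ x = (S.Eelt i) ⊗ₜ[K] (S.tauStarA t) ⊗ₜ[K] (S.Eelt j)}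

end TDSystem

variable {K V : Type*} [Field K] [AddCommGroup V] [Module K V]

namespace TDSystem

variable (S : TDSystem K V)

lemma coe_tauStarA (t : ℕ) :
    ((S.tauStarA t : Module.End K V)) = Polynomial.aeval S.Astar (S.tauStar t) :=
  (Polynomial.aeval_algHom_apply S.DstarAlg.val S.astar (S.tauStar t)).symm

lemma tauStar_monic (t : ℕ) : (S.tauStar t).Monic :=
  monic_prod_of_monic _ _ fun _ _ => monic_X_sub_C _

lemma tauStar_natDegree (t : ℕ) : (S.tauStar t).natDegree = t := by
  rw [tauStar, Polynomial.natDegree_prod]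
  · simp [Polynomial.natDegree_X_sub_C]
  · intro i _; exact X_sub_C_ne_zero _

lemma tauStar_eval_eq_zero {t : ℕ} {j : Fin (S.d+1)} (h : j.1 < t) :
    (S.tauStar t).eval (S.θstar j) = 0 := by
  rw [tauStar, Polynomial.eval_prod]
  refine Finset.prod_eq_zero (Finset.mem_range.mpr h) ?_
  rw [Fin.cast_val_eq_self j]
  simp

lemma tauStar_eval_ne_zero {t : ℕ} {j : Fin (S.d+1)} (h : t ≤ j.1) :
    (S.tauStar t).eval (S.θstar j) ≠ 0 := by
  rw [tauStar, Polynomial.eval_prod]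
  refine Finset.prod_ne_zero_iff.mpr fun m hm => ?_
  simp only [Polynomial.eval_sub, Polynomial.eval_X, Polynomial.eval_C, sub_ne_zero]
  intro he
  have hmlt : m < S.d + 1 := by
    have := Finset.mem_range.mp hm
    omega
  have := S.thetastar_inj he
  have : j.1 = m := by rw [this, Fin.val_cast_of_lt hmlt]
  have := Finset.mem_range.mp hm
  omega

lemma aeval_apply_eig (p : K[X]) (j : Fin (S.d+1)) {v : V}
    (hv : v ∈ S.Astar.eigenspace (S.θstar j)) :
    Polynomial.aeval S.Astar p v = p.eval (S.θstar j) • v := by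
  rcases eq_or_ne v 0 with rfl | hv0
  · simp
  · exact Module.End.aeval_apply_of_hasEigenvector ⟨hv, hv0⟩

lemma aeval_Astar_eq_sum (p : K[X]) :
    Polynomial.aeval S.Astar p = ∑ s : Fin (S.d+1), p.eval (S.θstar s) • S.Estar s := by
  have key : ∀ j : Fin (S.d+1), S.Astar.eigenspace (S.θstar j) ≤
      LinearMap.eqLocus (Polynomial.aeval S.Astar p)
        (∑ s : Fin (S.d+1), p.eval (S.θstar s) • S.Estar s) := by
    intro j v hv
    have h1 := S.aeval_apply_eig p j hv
    have h2 : (∑ s : Fin (S.d+1), p.eval (S.θstar s) • S.Estar s) v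
        = p.eval (S.θstar j) • v := by
      rw [LinearMap.sum_apply, Finset.sum_eq_single j]
      · rw [LinearMap.smul_apply, S.Estar_on_eig j v hv]
      · intro s _ hs
        rw [LinearMap.smul_apply, S.Estar_off_eig s j (Ne.symm hs) v hv, smul_zero]
      · simp
    exact h1.trans h2.symm
  have htop : (⊤ : Submodule K V) ≤ LinearMap.eqLocus (Polynomial.aeval S.Astar p)
      (∑ s : Fin (S.d+1), p.eval (S.θstar s) • S.Estar s) := S.sup_eigstar ▸ iSup_le key
  exact LinearMap.ext fun v => htop trivial

lemma tauStarA_eq_sum (t : ℕ) :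
    S.tauStarA t = ∑ s : Fin (S.d+1), (S.tauStar t).eval (S.θstar s) • S.EstarElt s := by
  apply Subtype.ext
  rw [coe_tauStarA, aeval_Astar_eq_sum]
  simp only [AddSubmonoidClass.coe_finset_sum, SetLike.val_smul]
  rfl

lemma tauStarA_mem_span_Estar (t : ℕ) :
    S.tauStarA t ∈ Submodule.span K
      {x : S.DstarAlg | ∃ s : Fin (S.d+1), t ≤ s.1 ∧ x = S.EstarElt s} := by
  rw [S.tauStarA_eq_sum t]
  refine Submodule.sum_mem _ fun s _ => ?_
  rcases lt_or_ge s.1 t with h | h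
  · rw [S.tauStar_eval_eq_zero h, zero_smul]; exact Submodule.zero_mem _
  · exact Submodule.smul_mem _ _ (Submodule.subset_span ⟨s, h, rfl⟩)

lemma EstarElt_mem_span_tau (j : Fin (S.d+1)) :
    S.EstarElt j ∈ Submodule.span K
      {x : S.DstarAlg | ∃ t : ℕ, j.1 ≤ t ∧ t ≤ S.d ∧ x = S.tauStarA t} := by
  suffices H : ∀ k : ℕ, ∀ j : Fin (S.d+1), S.d - j.1 = k →
      S.EstarElt j ∈ Submodule.span K
        {x : S.DstarAlg | ∃ t : ℕ, j.1 ≤ t ∧ t ≤ S.d ∧ x = S.tauStarA t} by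
    exact H _ j rfl
  intro k
  induction k using Nat.strong_induction_on with
  | _ k ih =>
    intro j hk
    have hc : (S.tauStar j.1).eval (S.θstar j) ≠ 0 := S.tauStar_eval_ne_zero le_rfl
    have hsum : S.tauStarA j.1 = (S.tauStar j.1).eval (S.θstar j) • S.EstarElt j
        + ∑ s ∈ Finset.univ.erase j, (S.tauStar j.1).eval (S.θstar s) • S.EstarElt s := by
      rw [S.tauStarA_eq_sum j.1, ← Finset.add_sum_erase _ _ (Finset.mem_univ j)]
    have heq : S.EstarElt j = ((S.tauStar j.1).eval (S.θstar j))⁻¹ •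
        (S.tauStarA j.1 - ∑ s ∈ Finset.univ.erase j,
          (S.tauStar j.1).eval (S.θstar s) • S.EstarElt s) := by
      rw [hsum, add_sub_cancel_right, smul_smul, inv_mul_cancel₀ hc, one_smul]
    rw [heq]
    refine Submodule.smul_mem _ _ (Submodule.sub_mem _ ?_
      (Submodule.sum_mem _ fun s hs => ?_))
    · exact Submodule.subset_span ⟨j.1, le_rfl, Nat.lt_succ_iff.mp j.isLt, rfl⟩
    · rcases lt_trichotomy s.1 j.1 with h | h | h
      · rw [S.tauStar_eval_eq_zero h, zero_smul]; exact Submodule.zero_mem _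
      · exact absurd (Fin.ext h) (Finset.ne_of_mem_erase hs)
      · refine Submodule.smul_mem _ _ (Submodule.span_mono ?_
          (ih (S.d - s.1) (by omega) s rfl))
        rintro x ⟨u, hsu, hud, rfl⟩
        exact ⟨u, by omega, hud, rfl⟩

lemma tauStarA_linearIndependent :
    LinearIndependent K (fun t : Fin (S.d+1) => S.tauStarA t.1) := by
  rw [Fintype.linearIndependent_iff]
  intro g hg
  set p : K[X] := ∑ t : Fin (S.d+1), Polynomial.C (g t) * S.tauStar t.1 with hp
  have hval : Polynomial.aeval S.Astar p = 0 := by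
    have h0 : ((∑ t : Fin (S.d+1), g t • S.tauStarA t.1 : S.DstarAlg) : Module.End K V)
        = 0 := by rw [hg]; rfl
    rw [hp, map_sum, ← h0]
    simp only [AddSubmonoidClass.coe_finset_sum, SetLike.val_smul, coe_tauStarA]
    refine Finset.sum_congr rfl fun t _ => ?_
    rw [map_mul, Polynomial.aeval_C, ← Algebra.smul_def]
  have hev : ∀ j : Fin (S.d+1), p.eval (S.θstar j) = 0 := by
    intro j
    obtain ⟨v, hv, hv0⟩ := (Submodule.ne_bot_iff _).mp (S.eigstar_ne_bot j)
    have h1 := S.aeval_apply_eig p j hv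
    rw [hval] at h1
    have h0 : p.eval (S.θstar j) • v = 0 := by rw [← h1]; rfl
    exact (smul_eq_zero.mp h0).resolve_right hv0
  have key : ∀ n : ℕ, ∀ j : Fin (S.d+1), j.1 < n → g j = 0 := by
    intro n
    induction n with
    | zero => intro j hj; omega
    | succ n ih =>
      intro j hj
      rcases lt_or_eq_of_le (Nat.lt_succ_iff.mp hj) with h | h
      · exact ih j h
      · have he := hev j
        rw [hp] at he
        simp only [Polynomial.eval_finset_sum, Polynomial.eval_mul, Polynomial.eval_C] at he
        rw [Finset.sum_eq_single j] at he
        · exact (mul_eq_zero.mp he).resolve_right (S.tauStar_eval_ne_zero le_rfl)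
        · intro t _ ht
          rcases lt_trichotomy t.1 j.1 with h' | h' | h'
          · rw [ih t (by omega), zero_mul]
          · exact absurd (Fin.ext h') ht
          · rw [S.tauStar_eval_eq_zero h', mul_zero]
        · simp
  intro i
  exact key (i.1+1) i (Nat.lt_succ_self _)

lemma aeval_mem_span_tauStarA :
    ∀ (n : ℕ) (p : K[X]), p.degree < (n : ℕ) →
    Polynomial.aeval S.astar p ∈ Submodule.span K
      {x : S.DstarAlg | ∃ s : ℕ, s < n ∧ x = S.tauStarA s} := by
  intro n
  induction n with
  | zero =>
    intro p hp
    have hp0 : p = 0 := by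
      ext m
      simpa using (Polynomial.degree_lt_iff_coeff_zero p 0).mp hp m (by simp)
    rw [hp0, map_zero]
    exact Submodule.zero_mem _
  | succ n ih =>
    intro p hp
    set c := p.coeff n with hc
    set r := p - Polynomial.C c * S.tauStar n with hr
    have hrdeg : r.degree < (n : ℕ) := by
      rw [Polynomial.degree_lt_iff_coeff_zero]
      intro m hm
      have hm' : n ≤ m := by exact_mod_cast hm
      rw [hr, Polynomial.coeff_sub, Polynomial.coeff_C_mul]
      rcases eq_or_lt_of_le hm' with hEq | hlt
      · have : (S.tauStar n).coeff n = 1 := by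
          have := (S.tauStar_monic n).coeff_natDegree
          rwa [S.tauStar_natDegree n] at this
        rw [← hEq, this, mul_one, ← hc, sub_self]
      · have hpm : p.coeff m = 0 :=
          (Polynomial.degree_lt_iff_coeff_zero p (n+1)).mp hp m (by exact_mod_cast hlt)
        have htm : (S.tauStar n).coeff m = 0 := by
          apply Polynomial.coeff_eq_zero_of_natDegree_lt
          rw [S.tauStar_natDegree n]; exact hlt
        rw [hpm, htm, mul_zero, sub_self]
    have hsplit : Polynomial.aeval S.astar p
        = c • S.tauStarA n + Polynomial.aeval S.astar r := by
      rw [hr, map_sub, map_mul, Polynomial.aeval_C, ← Algebra.smul_def]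
      rw [tauStarA]
      abel
    rw [hsplit]
    refine Submodule.add_mem _
      (Submodule.smul_mem _ _ (Submodule.subset_span ⟨n, Nat.lt_succ_self n, rfl⟩))
      (Submodule.span_mono ?_ (ih r hrdeg))
    rintro x ⟨s, hs, rfl⟩
    exact ⟨s, Nat.lt_succ_of_lt hs, rfl⟩

lemma tauStarA_mem_span_pow (t : ℕ) :
    S.tauStarA t ∈ Submodule.span K
      {x : S.DstarAlg | ∃ s : ℕ, s ≤ t ∧ x = S.astar ^ s} := by
  rw [tauStarA, Polynomial.aeval_eq_sum_range]
  refine Submodule.sum_mem _ fun i hi => Submodule.smul_mem _ _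
    (Submodule.subset_span ⟨i, ?_, rfl⟩)
  have h1 := Finset.mem_range.mp hi
  have h2 := S.tauStar_natDegree t
  omega

/-- The map `Y ↦ X ⊗ Y ⊗ Z`. -/
def psiMid (Xe Ze : S.Dalg) : S.DstarAlg →ₗ[K] S.TT :=
  ((TensorProduct.mk K (S.Dalg ⊗[K] S.DstarAlg) S.Dalg).flip Ze).comp
    (TensorProduct.mk K S.Dalg S.DstarAlg Xe)

lemma psiMid_apply (Xe Ze : S.Dalg) (Y : S.DstarAlg) :
    S.psiMid Xe Ze Y = Xe ⊗ₜ[K] Y ⊗ₜ[K] Ze := rfl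

lemma exists_dual_family {ι W' : Type*} [AddCommGroup W'] [Module K W'] [DecidableEq ι]
    {v : ι → W'} (hv : LinearIndependent K v) (t : ι) :
    ∃ f : W' →ₗ[K] K, ∀ s, f (v s) = if s = t then 1 else 0 := by
  obtain ⟨g, hg⟩ := LinearMap.exists_extend ((Basis.span hv).coord t)
  refine ⟨g, fun s => ?_⟩
  have hmem : v s ∈ Submodule.span K (Set.range v) := Submodule.subset_span ⟨s, rfl⟩
  have h1 : g (v s) = (g.comp (Submodule.span K (Set.range v)).subtype) ⟨v s, hmem⟩ := rfl
  have h2 : (⟨v s, hmem⟩ : Submodule.span K (Set.range v)) = Basis.span hv s :=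
    (Basis.span_apply hv s).symm
  rw [h1, hg, h2, Basis.coord_apply, Basis.repr_self, Finsupp.single_apply]

lemma indep_of_le_middleSub (W : Fin (S.d+1) → Submodule K S.TT)
    (hW : ∀ t, W t ≤ S.middleSub t.1) : iSupIndep W := by
  classical
  have hv := S.tauStarA_linearIndependent
  choose f hf using fun t => exists_dual_family hv t
  set φ : Fin (S.d+1) → (S.TT →ₗ[K] S.TT) := fun t =>
    LinearMap.rTensor S.Dalg
      (LinearMap.lTensor S.Dalg ((f t).smulRight (S.tauStarA t.1))) with hφ
  have hker : ∀ s t : Fin (S.d+1), s ≠ t → S.middleSub s.1 ≤ LinearMap.ker (φ t) := by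
    intro s t hst
    rw [middleSub, Submodule.span_le]
    rintro x ⟨Xe, Ze, rfl⟩
    simp only [SetLike.mem_coe, LinearMap.mem_ker, hφ, LinearMap.lTensor_tmul,
      LinearMap.rTensor_tmul, LinearMap.smulRight_apply]
    rw [hf t s, if_neg hst, zero_smul, TensorProduct.tmul_zero, TensorProduct.zero_tmul]
  have hfix : ∀ t : Fin (S.d+1), ∀ x ∈ S.middleSub t.1, φ t x = x := by
    intro t x hx
    have hle : S.middleSub t.1 ≤ LinearMap.eqLocus (φ t) LinearMap.id := by
      rw [middleSub, Submodule.span_le]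
      rintro y ⟨Xe, Ze, rfl⟩
      simp only [SetLike.mem_coe, LinearMap.mem_eqLocus, LinearMap.id_coe, id_eq, hφ,
        LinearMap.lTensor_tmul, LinearMap.rTensor_tmul, LinearMap.smulRight_apply]
      rw [hf t t, if_pos rfl, one_smul]
    exact hle hx
  rw [iSupIndep_def]
  intro t
  rw [Submodule.disjoint_def]
  intro x hxt hxs
  have h1 : φ t x = x := hfix t x (hW t hxt)
  have h2 : φ t x = 0 := by
    have hle : (⨆ (j) (_ : j ≠ t), W j) ≤ LinearMap.ker (φ t) :=
      iSup_le fun s => iSup_le fun hs => (hW s).trans (hker s t hs)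
    exact hle hxs
  rw [← h1, h2]

lemma Lt_le_middleSub (t : Fin (S.d+1)) : S.Lt t.1 ≤ S.middleSub t.1 := by
  refine Submodule.span_mono ?_
  rintro x ⟨i, Z, _, rfl⟩
  exact ⟨_, _, rfl⟩

lemma Rrt_le_middleSub (t : Fin (S.d+1)) : S.Rrt t.1 ≤ S.middleSub t.1 := by
  refine Submodule.span_mono ?_
  rintro x ⟨Xe, i, _, rfl⟩
  exact ⟨_, _, rfl⟩

lemma Mt_le_middleSub (t : Fin (S.d+1)) : S.Mt t.1 ≤ S.middleSub t.1 := by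
  refine Submodule.span_mono ?_
  rintro x ⟨i, j, _, rfl⟩
  exact ⟨_, _, rfl⟩

end TDSystem


/-- Lemma 6.6: each of the three summands of `R` decomposes as a direct sum
over `t = 0,…,d`. -/
theorem summands_directSum
    [FiniteDimensional K V] (hV : 0 < Module.finrank K V) (S : TDSystem K V) :
    (S.Lspace = (⨆ t : Fin (S.d+1), S.Lt t.1) ∧
      iSupIndep (fun t : Fin (S.d+1) => S.Lt t.1)) ∧
    (S.Rright = (⨆ t : Fin (S.d+1), S.Rrt t.1) ∧
      iSupIndep (fun t : Fin (S.d+1) => S.Rrt t.1)) ∧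
    (S.Mspace = (⨆ t : Fin (S.d+1), S.Mt t.1) ∧
      iSupIndep (fun t : Fin (S.d+1) => S.Mt t.1)) := by
  refine ⟨⟨?_, S.indep_of_le_middleSub _ S.Lt_le_middleSub⟩,
    ⟨?_, S.indep_of_le_middleSub _ S.Rrt_le_middleSub⟩,
    ⟨?_, S.indep_of_le_middleSub _ S.Mt_le_middleSub⟩⟩
  · -- Lspace
    apply le_antisymm
    · rw [TDSystem.Lspace, Submodule.span_le]
      rintro x ⟨i, j, Z, hij, rfl⟩
      have hmem := Submodule.apply_mem_span_image_of_mem_span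
        (S.psiMid (S.a ^ i) Z) (S.EstarElt_mem_span_tau j)
      refine Submodule.span_le.mpr ?_ hmem
      rintro y ⟨w, ⟨t, hjt, htd, rfl⟩, rfl⟩
      refine SetLike.mem_coe.mpr
        ((le_iSup (fun t : Fin (S.d+1) => S.Lt t.1) ⟨t, by omega⟩) ?_)
      exact Submodule.subset_span ⟨i, Z, show i < t by omega, rfl⟩
    · refine iSup_le fun t => ?_
      rw [TDSystem.Lt, Submodule.span_le]
      rintro x ⟨i, Z, hit, rfl⟩
      have hmem := Submodule.apply_mem_span_image_of_mem_span
        (S.psiMid (S.a ^ i) Z) (S.tauStarA_mem_span_Estar t.1)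
      refine Submodule.span_le.mpr ?_ hmem
      rintro y ⟨w, ⟨s, hts, rfl⟩, rfl⟩
      exact Submodule.subset_span ⟨i, s, Z, by omega, rfl⟩
  · -- Rright
    apply le_antisymm
    · rw [TDSystem.Rright, Submodule.span_le]
      rintro x ⟨Xe, i, j, hij, rfl⟩
      have hmem := Submodule.apply_mem_span_image_of_mem_span
        (S.psiMid Xe (S.a ^ i)) (S.EstarElt_mem_span_tau j)
      refine Submodule.span_le.mpr ?_ hmem
      rintro y ⟨w, ⟨t, hjt, htd, rfl⟩, rfl⟩
      refine SetLike.mem_coe.mpr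
        ((le_iSup (fun t : Fin (S.d+1) => S.Rrt t.1) ⟨t, by omega⟩) ?_)
      exact Submodule.subset_span ⟨Xe, i, show i < t by omega, rfl⟩
    · refine iSup_le fun t => ?_
      rw [TDSystem.Rrt, Submodule.span_le]
      rintro x ⟨Xe, i, hit, rfl⟩
      have hmem := Submodule.apply_mem_span_image_of_mem_span
        (S.psiMid Xe (S.a ^ i)) (S.tauStarA_mem_span_Estar t.1)
      refine Submodule.span_le.mpr ?_ hmem
      rintro y ⟨w, ⟨s, hts, rfl⟩, rfl⟩
      exact Submodule.subset_span ⟨Xe, i, s, by omega, rfl⟩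
  · -- Mspace
    apply le_antisymm
    · rw [TDSystem.Mspace, Submodule.span_le]
      rintro x ⟨i, j, t, htd, hdist, rfl⟩
      have hpowmem : (S.astar ^ t) ∈ Submodule.span K
          {x : S.DstarAlg | ∃ s : ℕ, s < t + 1 ∧ x = S.tauStarA s} := by
        have hdeg : (Polynomial.X ^ t : K[X]).degree < ((t+1 : ℕ) : ℕ) := by
          rw [Polynomial.degree_X_pow]
          exact_mod_cast Nat.lt_succ_self t
        have := S.aeval_mem_span_tauStarA (t+1) (Polynomial.X ^ t) hdeg
        rwa [map_pow, Polynomial.aeval_X] at this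
      have hmem := Submodule.apply_mem_span_image_of_mem_span
        (S.psiMid (S.Eelt i) (S.Eelt j)) hpowmem
      refine Submodule.span_le.mpr ?_ hmem
      rintro y ⟨w, ⟨s, hst, rfl⟩, rfl⟩
      refine SetLike.mem_coe.mpr
        ((le_iSup (fun t : Fin (S.d+1) => S.Mt t.1) ⟨s, by omega⟩) ?_)
      exact Submodule.subset_span ⟨i, j, show s < Nat.dist i.1 j.1 by omega, rfl⟩
    · refine iSup_le fun t => ?_
      rw [TDSystem.Mt, Submodule.span_le]
      rintro x ⟨i, j, hdist, rfl⟩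
      have hmem := Submodule.apply_mem_span_image_of_mem_span
        (S.psiMid (S.Eelt i) (S.Eelt j)) (S.tauStarA_mem_span_pow t.1)
      refine Submodule.span_le.mpr ?_ hmem
      rintro y ⟨w, ⟨s, hst, rfl⟩, rfl⟩
      have hsd : s ≤ S.d := by have := t.isLt; omega
      have hij : Nat.dist i.1 j.1 ≤ S.d := by
        have hi := i.isLt; have hj := j.isLt
        show i.1 - j.1 + (j.1 - i.1) ≤ S.d
        omega
      exact Submodule.subset_span ⟨i, j, s, hsd, by omega, rfl⟩


end
end

section
/- Let the notation be as in the context. Let t, i, j be integers with 0 ≤ t ≤ d and 0 ≤ i < j ≤ i + t ≤ d, and define the polynomial f^t_{ij} = ∏_{h=i+1, h ≠ j}^{i+t} (λ − θ_h) in K[λ]. Then the subspace R_t + Span{E_h ⊗ τ*_t(A*) ⊗ E_h | 0 ≤ h < i} of D ⊗ D* ⊗ D contains both of the elements f^t_{ij}(θ_i) E_i ⊗ τ*_t(A*) ⊗ E_i + f^t_{ij}(θ_j) E_i ⊗ τ*_t(A*) ⊗ E_j and f^t_{ij}(θ_i) E_i ⊗ τ*_t(A*) ⊗ E_i + f^t_{ij}(θ_j)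 E_j ⊗ τ*_t(A*) ⊗ E_i. -/
open Module Polynomial TensorProduct
open Fin.NatCast

set_option synthInstance.maxHeartbeats 1000000
set_option maxHeartbeats 1000000

noncomputable section

namespace TDSystem

variable {K V : Type*} [Field K] [AddCommGroup V] [Module K V] (S : TDSystem K V)

private lemma aeval_apply_eigen' (B : Module.End K V) (μ : K) (v : V) (hv : B v = μ • v)
    (p : Polynomial K) : (aeval B p) v = p.eval μ • v := by
  have hpow : ∀ n : ℕ, (B ^ n) v = μ ^ n • v := by
    intro n; induction n with
    | zero => simp
    | succ n ih =>
      rw [pow_succ', Module.End.mul_apply, ih, map_smul, hv, smul_smul, ← pow_succ]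
  induction p using Polynomial.induction_on' with
  | add p q hp hq => simp [hp, hq, add_smul]
  | monomial n a =>
    simp [aeval_monomial, Module.End.mul_apply, Module.algebraMap_end_apply, hpow,
      smul_smul, eval_monomial, mul_comm]

private lemma spectral (B : Module.End K V) {n : ℕ} (θ : Fin n → K)
    (E : Fin n → Module.End K V)
    (hsup : (⨆ i, B.eigenspace (θ i)) = ⊤)
    (hon : ∀ i, ∀ v ∈ B.eigenspace (θ i), E i v = v)
    (hoff : ∀ i j, j ≠ i → ∀ v ∈ B.eigenspace (θ j), E i v = 0)
    (p : Polynomial K) :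
    (aeval B p) = ∑ h, p.eval (θ h) • E h := by
  have hle : (⨆ i, B.eigenspace (θ i)) ≤
      LinearMap.eqLocus (aeval B p) (∑ h, p.eval (θ h) • E h) := by
    apply iSup_le
    intro h v hv
    have hBv : B v = θ h • v := Module.End.mem_eigenspace_iff.mp hv
    have : (aeval B p) v = (∑ g, p.eval (θ g) • E g) v := by
      rw [aeval_apply_eigen' B (θ h) v hBv, LinearMap.sum_apply,
        Finset.sum_eq_single h]
      · simp [hon h v hv]
      · intro g _ hg
        rw [LinearMap.smul_apply, hoff g h hg.symm v hv, smul_zero]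
      · simp
    exact this
  rw [hsup] at hle
  exact LinearMap.ext fun v => hle Submodule.mem_top

lemma aeval_a_eq_sum (p : Polynomial K) :
    (aeval S.a p) = ∑ h, p.eval (S.θ h) • S.Eelt h := by
  apply Subtype.ext
  have h1 : ((aeval S.a p : S.Dalg) : Module.End K V) = aeval S.A p :=
    (aeval_algHom_apply S.Dalg.val S.a p).symm
  rw [h1, spectral S.A S.θ S.E S.sup_eig S.E_on_eig S.E_off_eig p]
  simp [Eelt]

lemma aeval_astar_eq_sum (p : Polynomial K) :
    (aeval S.astar p) = ∑ h, p.eval (S.θstar h) • S.EstarElt h := by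
  apply Subtype.ext
  have h1 : ((aeval S.astar p : S.DstarAlg) : Module.End K V) = aeval S.Astar p :=
    (aeval_algHom_apply S.DstarAlg.val S.astar p).symm
  rw [h1, spectral S.Astar S.θstar S.Estar S.sup_eigstar S.Estar_on_eig S.Estar_off_eig p]
  simp [EstarElt]

lemma tauStar_eval_zero (t : ℕ) (m : Fin (S.d+1)) (hm : m.1 < t) :
    (S.tauStar t).eval (S.θstar m) = 0 := by
  unfold tauStar
  rw [eval_prod]
  apply Finset.prod_eq_zero (Finset.mem_range.mpr hm)
  simp [Fin.cast_val_eq_self]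

lemma natDegree_tauStar_le (t : ℕ) : (S.tauStar t).natDegree ≤ t := by
  unfold tauStar
  refine le_trans (Polynomial.natDegree_prod_le _ _) ?_
  simp [Polynomial.natDegree_X_sub_C]

lemma tmul_middle (Xe : S.Dalg) (Ze : S.Dalg) (t : ℕ) :
    Xe ⊗ₜ[K] (S.tauStarA t) ⊗ₜ[K] Ze
      = ∑ m, (S.tauStar t).eval (S.θstar m) • (Xe ⊗ₜ[K] (S.EstarElt m) ⊗ₜ[K] Ze) := by
  rw [tauStarA, aeval_astar_eq_sum]
  simp only [TensorProduct.sum_tmul, TensorProduct.tmul_sum, ← TensorProduct.smul_tmul',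
    TensorProduct.tmul_smul]

lemma tmul_third (Xe : S.Dalg) (Ye : S.DstarAlg) (p : Polynomial K) :
    Xe ⊗ₜ[K] Ye ⊗ₜ[K] (aeval S.a p)
      = ∑ h, p.eval (S.θ h) • (Xe ⊗ₜ[K] Ye ⊗ₜ[K] S.Eelt h) := by
  rw [aeval_a_eq_sum]
  simp only [TensorProduct.tmul_sum, TensorProduct.tmul_smul]

lemma tmul_first (p : Polynomial K) (Ye : S.DstarAlg) (Ze : S.Dalg) :
    (aeval S.a p) ⊗ₜ[K] Ye ⊗ₜ[K] Ze
      = ∑ h, p.eval (S.θ h) • (S.Eelt h ⊗ₜ[K] Ye ⊗ₜ[K] Ze) := by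
  rw [aeval_a_eq_sum]
  simp only [TensorProduct.sum_tmul, ← TensorProduct.smul_tmul']

lemma mem_middleSub (Xe Ze : S.Dalg) (t : ℕ) :
    Xe ⊗ₜ[K] (S.tauStarA t) ⊗ₜ[K] Ze ∈ S.middleSub t :=
  Submodule.subset_span ⟨Xe, Ze, rfl⟩

lemma mem_Rt_right (t : ℕ) (Xe : S.Dalg) (p : Polynomial K) (hp : p.natDegree < t) :
    Xe ⊗ₜ[K] (S.tauStarA t) ⊗ₜ[K] (aeval S.a p) ∈ S.Rt t := by
  constructor
  · -- in Rspace
    apply Submodule.mem_sup_left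
    apply Submodule.mem_sup_right
    rw [aeval_eq_sum_range, TensorProduct.tmul_sum]
    apply Submodule.sum_mem
    intro s hs
    rw [TensorProduct.tmul_smul]
    apply Submodule.smul_mem
    rw [S.tmul_middle]
    apply Submodule.sum_mem
    intro m _
    by_cases hm : m.1 < t
    · rw [S.tauStar_eval_zero t m hm, zero_smul]; exact Submodule.zero_mem _
    · apply Submodule.smul_mem
      apply Submodule.subset_span
      refine ⟨Xe, s, m, ?_, rfl⟩
      have hs' : s < p.natDegree + 1 := Finset.mem_range.mp hs
      omega
  · exact S.mem_middleSub _ _ t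

lemma mem_Rt_left (t : ℕ) (p : Polynomial K) (hp : p.natDegree < t) (Ze : S.Dalg) :
    (aeval S.a p) ⊗ₜ[K] (S.tauStarA t) ⊗ₜ[K] Ze ∈ S.Rt t := by
  constructor
  · apply Submodule.mem_sup_left
    apply Submodule.mem_sup_left
    rw [aeval_eq_sum_range, TensorProduct.sum_tmul, TensorProduct.sum_tmul]
    apply Submodule.sum_mem
    intro s hs
    rw [← TensorProduct.smul_tmul', ← TensorProduct.smul_tmul']
    apply Submodule.smul_mem
    rw [show ((S.a ^ s) ⊗ₜ[K] (S.tauStarA t) ⊗ₜ[K] Ze : S.TT)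
        = ∑ m, (S.tauStar t).eval (S.θstar m) • ((S.a ^ s) ⊗ₜ[K] (S.EstarElt m) ⊗ₜ[K] Ze)
      from S.tmul_middle _ _ t]
    apply Submodule.sum_mem
    intro m _
    by_cases hm : m.1 < t
    · rw [S.tauStar_eval_zero t m hm, zero_smul]; exact Submodule.zero_mem _
    · apply Submodule.smul_mem
      apply Submodule.subset_span
      refine ⟨s, m, Ze, ?_, rfl⟩
      have hs' : s < p.natDegree + 1 := Finset.mem_range.mp hs
      omega
  · exact S.mem_middleSub _ _ t

lemma mem_Rt_M (t : ℕ) (ht : t ≤ S.d) (i j : Fin (S.d+1)) (hdist : t < Nat.dist i.1 j.1) :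
    (S.Eelt i) ⊗ₜ[K] (S.tauStarA t) ⊗ₜ[K] (S.Eelt j) ∈ S.Rt t := by
  constructor
  · apply Submodule.mem_sup_right
    rw [show (S.tauStarA t) = aeval S.astar (S.tauStar t) from rfl, aeval_eq_sum_range,
      TensorProduct.tmul_sum, TensorProduct.sum_tmul]
    apply Submodule.sum_mem
    intro s hs
    rw [TensorProduct.tmul_smul, ← TensorProduct.smul_tmul']
    apply Submodule.smul_mem
    apply Submodule.subset_span
    have hs' : s < (S.tauStar t).natDegree + 1 := Finset.mem_range.mp hs
    have hst : s ≤ t := le_trans (Nat.lt_succ_iff.mp hs') (S.natDegree_tauStar_le t)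
    exact ⟨i, j, s, le_trans hst ht, lt_of_le_of_lt hst hdist, rfl⟩
  · exact S.mem_middleSub _ _ t

end TDSystem
namespace TDSystem

variable {K V : Type*} [Field K] [AddCommGroup V] [Module K V] (S : TDSystem K V)

/-- Diagonal span used as error term. -/
def dspan (t i : ℕ) : Submodule K S.TT :=
  Submodule.span K {x : S.TT | ∃ h : Fin (S.d+1), h.1 < i ∧
    x = (S.Eelt h) ⊗ₜ[K] (S.tauStarA t) ⊗ₜ[K] (S.Eelt h)}

lemma dspan_mono (t : ℕ) {i i' : ℕ} (hii : i ≤ i') : S.dspan t i ≤ S.dspan t i' := by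
  apply Submodule.span_mono
  rintro x ⟨g, hg, hx⟩
  exact ⟨g, lt_of_lt_of_le hg hii, hx⟩

lemma fpoly_eval_ne_zero {b : ℕ} (hb : b ≤ S.d) (F : Finset ℕ)
    (hF : ∀ g ∈ F, g ≤ S.d ∧ g ≠ b) :
    (∏ g ∈ F, (X - C (S.θ (g : ℕ)))).eval (S.θ (b : ℕ)) ≠ 0 := by
  rw [eval_prod]
  rw [Finset.prod_ne_zero_iff]
  intro g hg
  simp only [eval_sub, eval_X, eval_C]
  apply sub_ne_zero_of_ne
  intro heq
  have := S.theta_inj heq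
  obtain ⟨hgd, hgb⟩ := hF g hg
  apply hgb
  have h1 : ((b : Fin (S.d+1)) : ℕ) = b := Fin.val_cast_of_lt (by omega)
  have h2 : ((g : Fin (S.d+1)) : ℕ) = g := Fin.val_cast_of_lt (by omega)
  rw [← h2, ← this]
  exact h1

set_option maxHeartbeats 8000000 in
lemma keylemma (t : ℕ) (ht : t ≤ S.d) (i : ℕ) :
    ∀ j : ℕ, i < j → j ≤ i + t → i + t ≤ S.d →
    (((∏ h ∈ (Finset.Icc (i+1) (i+t)).erase j,
          (X - C (S.θ (h : ℕ)))).eval (S.θ (i : ℕ))) •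
        ((S.Eelt (i : ℕ)) ⊗ₜ[K] (S.tauStarA t) ⊗ₜ[K] (S.Eelt (i : ℕ))) +
      ((∏ h ∈ (Finset.Icc (i+1) (i+t)).erase j,
          (X - C (S.θ (h : ℕ)))).eval (S.θ (j : ℕ))) •
        ((S.Eelt (i : ℕ)) ⊗ₜ[K] (S.tauStarA t) ⊗ₜ[K] (S.Eelt (j : ℕ)))
      ∈ S.Rt t ⊔ S.dspan t i) ∧
    (((∏ h ∈ (Finset.Icc (i+1) (i+t)).erase j,
          (X - C (S.θ (h : ℕ)))).eval (S.θ (i : ℕ))) •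
        ((S.Eelt (i : ℕ)) ⊗ₜ[K] (S.tauStarA t) ⊗ₜ[K] (S.Eelt (i : ℕ))) +
      ((∏ h ∈ (Finset.Icc (i+1) (i+t)).erase j,
          (X - C (S.θ (h : ℕ)))).eval (S.θ (j : ℕ))) •
        ((S.Eelt (j : ℕ)) ⊗ₜ[K] (S.tauStarA t) ⊗ₜ[K] (S.Eelt (i : ℕ)))
      ∈ S.Rt t ⊔ S.dspan t i) := by
  induction i using Nat.strong_induction_on with
  | _ i IH =>
  intro j hij hji hit
  set f : Polynomial K := ∏ h ∈ (Finset.Icc (i+1) (i+t)).erase j,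
      (X - C (S.θ (h : ℕ))) with hf
  have htpos : 0 < t := by omega
  have hvi : ((i : Fin (S.d+1)) : ℕ) = i := Fin.val_cast_of_lt (by omega)
  have hvj : ((j : Fin (S.d+1)) : ℕ) = j := Fin.val_cast_of_lt (by omega)
  have hne : (j : Fin (S.d+1)) ≠ (i : Fin (S.d+1)) := by
    intro hcontra
    have := congrArg Fin.val hcontra
    rw [hvi, hvj] at this
    omega
  have hjmem : j ∈ Finset.Icc (i+1) (i+t) := Finset.mem_Icc.mpr ⟨by omega, hji⟩
  have hdeg : f.natDegree < t := by
    have h1 : f.natDegree ≤ ∑ h ∈ (Finset.Icc (i+1) (i+t)).erase j,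
        (X - C (S.θ (h : ℕ))).natDegree := Polynomial.natDegree_prod_le _ _
    have h2 : ∀ h ∈ (Finset.Icc (i+1) (i+t)).erase j,
        (X - C (S.θ (h : ℕ))).natDegree = 1 := fun h _ => Polynomial.natDegree_X_sub_C _
    rw [Finset.sum_congr rfl h2, Finset.sum_const, smul_eq_mul, mul_one,
      Finset.card_erase_of_mem hjmem, Nat.card_Icc] at h1
    omega
  have hzero : ∀ h : Fin (S.d+1), i < h.1 → h.1 ≤ i + t → h ≠ (j : Fin (S.d+1)) →
      f.eval (S.θ h) = 0 := by
    intro h h1 h2 h3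
    rw [hf, eval_prod]
    have hmem : h.1 ∈ (Finset.Icc (i+1) (i+t)).erase j := by
      apply Finset.mem_erase.mpr
      constructor
      · intro hcontra
        exact h3 (Fin.val_injective (by rw [hvj]; exact hcontra))
      · exact Finset.mem_Icc.mpr ⟨by omega, h2⟩
    have hfac : Polynomial.eval (S.θ h) (X - C (S.θ ((h.1 : ℕ) : Fin (S.d+1)))) = 0 := by
      simp [Fin.cast_val_eq_self]
    exact Finset.prod_eq_zero hmem hfac
  -- membership of all "other" terms, third-slot version (for part 1)
  have key1 : ∀ h : Fin (S.d+1), h ≠ (i : Fin (S.d+1)) → h ≠ (j : Fin (S.d+1)) →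
      f.eval (S.θ h) • ((S.Eelt (i : ℕ)) ⊗ₜ[K] (S.tauStarA t) ⊗ₜ[K] (S.Eelt h))
        ∈ S.Rt t ⊔ S.dspan t i := by
    intro h hhi hhj
    rcases lt_trichotomy h.1 i with hlt | heq | hgt
    · by_cases hfar : i ≤ h.1 + t
      · obtain ⟨-, ih2⟩ := IH h.1 hlt i hlt hfar (by omega)
        rw [Fin.cast_val_eq_self] at ih2
        set g : Polynomial K := ∏ m ∈ (Finset.Icc (h.1+1) (h.1+t)).erase i,
            (X - C (S.θ (m : ℕ))) with hg
        set c1 : K := g.eval (S.θ h) with hc1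
        set c2 : K := g.eval (S.θ ((i : ℕ) : Fin (S.d+1))) with hc2
        have hc2ne : c2 ≠ 0 := by
          apply S.fpoly_eval_ne_zero (by omega)
          intro m hm
          obtain ⟨hm1, hm2⟩ := Finset.mem_erase.mp hm
          have := Finset.mem_Icc.mp hm2
          exact ⟨by omega, hm1⟩
        set y : S.TT := (S.Eelt h) ⊗ₜ[K] (S.tauStarA t) ⊗ₜ[K] (S.Eelt h) with hy
        set x : S.TT := (S.Eelt (i : ℕ)) ⊗ₜ[K] (S.tauStarA t) ⊗ₜ[K] (S.Eelt h) with hx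
        have hymem : y ∈ S.dspan t i := Submodule.subset_span ⟨h, hlt, rfl⟩
        have hWle : S.Rt t ⊔ S.dspan t h.1 ≤ S.Rt t ⊔ S.dspan t i :=
          sup_le_sup_left (S.dspan_mono t (le_of_lt hlt)) _
        have hxeq : x = c2⁻¹ • (c1 • y + c2 • x) + (-(c2⁻¹ * c1)) • y := by
          rw [smul_add, smul_smul, smul_smul, inv_mul_cancel₀ hc2ne, one_smul]
          module
        have m1 : c2⁻¹ • (c1 • y + c2 • x) ∈ S.Rt t ⊔ S.dspan t i :=
          Submodule.smul_mem _ _ (hWle ih2)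
        have m2 : (-(c2⁻¹ * c1)) • y ∈ S.Rt t ⊔ S.dspan t i :=
          Submodule.smul_mem _ _ (Submodule.mem_sup_right hymem)
        have hxmem : x ∈ S.Rt t ⊔ S.dspan t i := by
          rw [hxeq]
          exact Submodule.add_mem _ m1 m2
        exact Submodule.smul_mem _ _ hxmem
      · have hdist : t < Nat.dist ((i : Fin (S.d+1)) : ℕ) h.1 := by
          rw [hvi]; simp only [Nat.dist]; omega
        exact Submodule.smul_mem _ _
          (Submodule.mem_sup_left (S.mem_Rt_M t ht _ h hdist))
    · exact absurd (Fin.val_injective (by rw [hvi]; exact heq)) hhi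
    · by_cases hle : h.1 ≤ i + t
      · rw [hzero h hgt hle hhj, zero_smul]
        exact Submodule.zero_mem _
      · have hdist : t < Nat.dist ((i : Fin (S.d+1)) : ℕ) h.1 := by
          rw [hvi]; simp only [Nat.dist]; omega
        exact Submodule.smul_mem _ _
          (Submodule.mem_sup_left (S.mem_Rt_M t ht _ h hdist))
  -- membership of all "other" terms, first-slot version (for part 2)
  have key2 : ∀ h : Fin (S.d+1), h ≠ (i : Fin (S.d+1)) → h ≠ (j : Fin (S.d+1)) →
      f.eval (S.θ h) • ((S.Eelt h) ⊗ₜ[K] (S.tauStarA t) ⊗ₜ[K] (S.Eelt (i : ℕ)))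
        ∈ S.Rt t ⊔ S.dspan t i := by
    intro h hhi hhj
    rcases lt_trichotomy h.1 i with hlt | heq | hgt
    · by_cases hfar : i ≤ h.1 + t
      · obtain ⟨ih1, -⟩ := IH h.1 hlt i hlt hfar (by omega)
        rw [Fin.cast_val_eq_self] at ih1
        set g : Polynomial K := ∏ m ∈ (Finset.Icc (h.1+1) (h.1+t)).erase i,
            (X - C (S.θ (m : ℕ))) with hg
        set c1 : K := g.eval (S.θ h) with hc1
        set c2 : K := g.eval (S.θ ((i : ℕ) : Fin (S.d+1))) with hc2
        have hc2ne : c2 ≠ 0 := by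
          apply S.fpoly_eval_ne_zero (by omega)
          intro m hm
          obtain ⟨hm1, hm2⟩ := Finset.mem_erase.mp hm
          have := Finset.mem_Icc.mp hm2
          exact ⟨by omega, hm1⟩
        set y : S.TT := (S.Eelt h) ⊗ₜ[K] (S.tauStarA t) ⊗ₜ[K] (S.Eelt h) with hy
        set x : S.TT := (S.Eelt h) ⊗ₜ[K] (S.tauStarA t) ⊗ₜ[K] (S.Eelt (i : ℕ)) with hx
        have hymem : y ∈ S.dspan t i := Submodule.subset_span ⟨h, hlt, rfl⟩
        have hWle : S.Rt t ⊔ S.dspan t h.1 ≤ S.Rt t ⊔ S.dspan t i :=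
          sup_le_sup_left (S.dspan_mono t (le_of_lt hlt)) _
        have hxeq : x = c2⁻¹ • (c1 • y + c2 • x) + (-(c2⁻¹ * c1)) • y := by
          rw [smul_add, smul_smul, smul_smul, inv_mul_cancel₀ hc2ne, one_smul]
          module
        have hxmem : x ∈ S.Rt t ⊔ S.dspan t i := by
          rw [hxeq]
          exact Submodule.add_mem _ (Submodule.smul_mem _ _ (hWle ih1))
            (Submodule.smul_mem _ _ (Submodule.mem_sup_right hymem))
        exact Submodule.smul_mem _ _ hxmem
      · have hdist : t < Nat.dist h.1 ((i : Fin (S.d+1)) : ℕ) := by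
          rw [hvi]; simp only [Nat.dist]; omega
        exact Submodule.smul_mem _ _
          (Submodule.mem_sup_left (S.mem_Rt_M t ht h _ hdist))
    · exact absurd (Fin.val_injective (by rw [hvi]; exact heq)) hhi
    · by_cases hle : h.1 ≤ i + t
      · rw [hzero h hgt hle hhj, zero_smul]
        exact Submodule.zero_mem _
      · have hdist : t < Nat.dist h.1 ((i : Fin (S.d+1)) : ℕ) := by
          rw [hvi]; simp only [Nat.dist]; omega
        exact Submodule.smul_mem _ _
          (Submodule.mem_sup_left (S.mem_Rt_M t ht h _ hdist))
  have hgen : ∀ G : Fin (S.d+1) → S.TT,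
      G ((i : ℕ) : Fin (S.d+1)) + G ((j : ℕ) : Fin (S.d+1))
        = (∑ h, G h) + (-1 : K) • ∑ h ∈ (Finset.univ.erase ((i : ℕ) : Fin (S.d+1))).erase
            ((j : ℕ) : Fin (S.d+1)), G h := by
    intro G
    rw [← Finset.add_sum_erase _ G (Finset.mem_univ ((i : ℕ) : Fin (S.d+1))),
      ← Finset.add_sum_erase _ G (Finset.mem_erase.mpr ⟨hne, Finset.mem_univ _⟩)]
    module
  constructor
  · -- Part 1
    have hsum : (∑ h, f.eval (S.θ h) •
        ((S.Eelt (i : ℕ)) ⊗ₜ[K] (S.tauStarA t) ⊗ₜ[K] (S.Eelt h))) ∈ S.Rt t ⊔ S.dspan t i := by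
      rw [← S.tmul_third (S.Eelt (i : ℕ)) (S.tauStarA t) f]
      exact Submodule.mem_sup_left (S.mem_Rt_right t _ f hdeg)
    have hrest : (∑ h ∈ (Finset.univ.erase ((i : ℕ) : Fin (S.d+1))).erase
        ((j : ℕ) : Fin (S.d+1)), f.eval (S.θ h) •
        ((S.Eelt (i : ℕ)) ⊗ₜ[K] (S.tauStarA t) ⊗ₜ[K] (S.Eelt h)))
        ∈ S.Rt t ⊔ S.dspan t i := by
      apply Submodule.sum_mem
      intro h hh
      obtain ⟨hh1, hh2⟩ := Finset.mem_erase.mp hh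
      obtain ⟨hh3, -⟩ := Finset.mem_erase.mp hh2
      exact key1 h hh3 hh1
    have heq := hgen (fun h => f.eval (S.θ h) •
        ((S.Eelt (i : ℕ)) ⊗ₜ[K] (S.tauStarA t) ⊗ₜ[K] (S.Eelt h)))
    rw [heq]
    exact Submodule.add_mem _ hsum (Submodule.smul_mem _ _ hrest)
  · -- Part 2
    have hsum : (∑ h, f.eval (S.θ h) •
        ((S.Eelt h) ⊗ₜ[K] (S.tauStarA t) ⊗ₜ[K] (S.Eelt (i : ℕ)))) ∈ S.Rt t ⊔ S.dspan t i := by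
      rw [← S.tmul_first f (S.tauStarA t) (S.Eelt (i : ℕ))]
      exact Submodule.mem_sup_left (S.mem_Rt_left t f hdeg _)
    have hrest : (∑ h ∈ (Finset.univ.erase ((i : ℕ) : Fin (S.d+1))).erase
        ((j : ℕ) : Fin (S.d+1)), f.eval (S.θ h) •
        ((S.Eelt h) ⊗ₜ[K] (S.tauStarA t) ⊗ₜ[K] (S.Eelt (i : ℕ))))
        ∈ S.Rt t ⊔ S.dspan t i := by
      apply Submodule.sum_mem
      intro h hh
      obtain ⟨hh1, hh2⟩ := Finset.mem_erase.mp hh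
      obtain ⟨hh3, -⟩ := Finset.mem_erase.mp hh2
      exact key2 h hh3 hh1
    have heq := hgen (fun h => f.eval (S.θ h) •
        ((S.Eelt h) ⊗ₜ[K] (S.tauStarA t) ⊗ₜ[K] (S.Eelt (i : ℕ))))
    rw [heq]
    exact Submodule.add_mem _ hsum (Submodule.smul_mem _ _ hrest)

end TDSystem

variable {K V : Type*} [Field K] [AddCommGroup V] [Module K V]


/-- Lemma 9.1: the technical containment involving the polynomials `f^t_{ij}`. -/
theorem technical_containment
    [FiniteDimensional K V] (hV : 0 < Module.finrank K V) (S : TDSystem K V)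
    (t i j : ℕ) (ht : t ≤ S.d) (hij : i < j) (hji : j ≤ i + t) (hit : i + t ≤ S.d) :
    (((∏ h ∈ (Finset.Icc (i+1) (i+t)).erase j,
          (X - C (S.θ (h : ℕ)))).eval (S.θ (i : ℕ))) •
        ((S.Eelt (i : ℕ)) ⊗ₜ[K] (S.tauStarA t) ⊗ₜ[K] (S.Eelt (i : ℕ))) +
      ((∏ h ∈ (Finset.Icc (i+1) (i+t)).erase j,
          (X - C (S.θ (h : ℕ)))).eval (S.θ (j : ℕ))) •
        ((S.Eelt (i : ℕ)) ⊗ₜ[K] (S.tauStarA t) ⊗ₜ[K] (S.Eelt (j : ℕ)))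
      ∈ S.Rt t ⊔ Submodule.span K {x : S.TT | ∃ h : Fin (S.d+1), h.1 < i ∧
          x = (S.Eelt h) ⊗ₜ[K] (S.tauStarA t) ⊗ₜ[K] (S.Eelt h)}) ∧
    (((∏ h ∈ (Finset.Icc (i+1) (i+t)).erase j,
          (X - C (S.θ (h : ℕ)))).eval (S.θ (i : ℕ))) •
        ((S.Eelt (i : ℕ)) ⊗ₜ[K] (S.tauStarA t) ⊗ₜ[K] (S.Eelt (i : ℕ))) +
      ((∏ h ∈ (Finset.Icc (i+1) (i+t)).erase j,
          (X - C (S.θ (h : ℕ)))).eval (S.θ (j : ℕ))) •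
        ((S.Eelt (j : ℕ)) ⊗ₜ[K] (S.tauStarA t) ⊗ₜ[K] (S.Eelt (i : ℕ)))
      ∈ S.Rt t ⊔ Submodule.span K {x : S.TT | ∃ h : Fin (S.d+1), h.1 < i ∧
          x = (S.Eelt h) ⊗ₜ[K] (S.tauStarA t) ⊗ₜ[K] (S.Eelt h)}) := by
  have h := S.keylemma t ht i j hij hji hit
  unfold TDSystem.dspan at h
  exact h

end
end

section
/- Let the notation be as in the context. Then for 0 ≤ t ≤ d and 0 ≤ i ≤ d − t, the element E_i ⊗ τ*_t(A*) ⊗ E_{i+t} − (θ*_0 − θ*_1)(θ*_0 − θ*_2)···(θ*_0 − θ*_t) E_i ⊗ E*_0 ⊗ E_{i+t} of D ⊗ D* ⊗ D is contained in the subspace R + Σ_{n=t+1}^d D ⊗ Kτ*_n(A*) ⊗ D. -/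
open Module Polynomial TensorProduct
open Fin.NatCast

set_option synthInstance.maxHeartbeats 1000000
set_option maxHeartbeats 1000000

noncomputable section

namespace TDSystem

variable {K V : Type*} [Field K] [AddCommGroup V] [Module K V] (S : TDSystem K V)

/-- The canonical additive group structure on `D ⊗ D* ⊗ D` (added in the port). -/
instance instAddCommGroupTT : AddCommGroup S.TT :=
  @TensorProduct.addCommGroup K _ (S.Dalg ⊗[K] S.DstarAlg) S.Dalg _ _ _ _

end TDSystem

variable {K V : Type*} [Field K] [AddCommGroup V] [Module K V]


private lemma TD_tmul_smul_mid {M N P : Type*} [AddCommMonoid M] [AddCommMonoid N]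
    [AddCommMonoid P] [Module K M] [Module K N] [Module K P] (r : K) (a : M) (y : N) (b : P) :
    (a ⊗ₜ[K] (r • y)) ⊗ₜ[K] b = r • ((a ⊗ₜ[K] y) ⊗ₜ[K] b) := by
  rw [TensorProduct.tmul_smul, ← TensorProduct.smul_tmul']

private lemma TD_tmul_add_mid {M N P : Type*} [AddCommMonoid M] [AddCommMonoid N]
    [AddCommMonoid P] [Module K M] [Module K N] [Module K P] (a : M) (y z : N) (b : P) :
    (a ⊗ₜ[K] (y + z)) ⊗ₜ[K] b = (a ⊗ₜ[K] y) ⊗ₜ[K] b + (a ⊗ₜ[K] z) ⊗ₜ[K] b := by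
  rw [TensorProduct.tmul_add, TensorProduct.add_tmul]

private lemma TD_tmul_zero_mid {M N P : Type*} [AddCommMonoid M] [AddCommMonoid N]
    [AddCommMonoid P] [Module K M] [Module K N] [Module K P] (a : M) (b : P) :
    (a ⊗ₜ[K] ((0 : N))) ⊗ₜ[K] b = 0 := by
  rw [TensorProduct.tmul_zero, TensorProduct.zero_tmul]

private lemma TD_tmul_sum_mid {M N P : Type*} [AddCommMonoid M] [AddCommMonoid N]
    [AddCommMonoid P] [Module K M] [Module K N] [Module K P] {σ : Type*} (F : Finset σ)
    (a : M) (y : σ → N) (b : P) :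
    (a ⊗ₜ[K] (∑ s ∈ F, y s)) ⊗ₜ[K] b = ∑ s ∈ F, (a ⊗ₜ[K] y s) ⊗ₜ[K] b := by
  rw [TensorProduct.tmul_sum, TensorProduct.sum_tmul]

private lemma TD_aeval_apply_mem_eigenspace {f : Module.End K V} {μ : K} {v : V}
    (hv : v ∈ f.eigenspace μ) (p : Polynomial K) :
    (Polynomial.aeval f p) v = p.eval μ • v := by
  rcases eq_or_ne v 0 with rfl | h
  · simp
  · exact Module.End.aeval_apply_of_hasEigenvector ⟨hv, h⟩

private lemma TD_prod_Icc_one {β : Type*} [CommMonoid β] (f : ℕ → β) (t : ℕ) :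
    ∏ h ∈ Finset.Icc 1 t, f h = ∏ h ∈ Finset.range t, f (h + 1) := by
  induction t with
  | zero => simp
  | succ t ih =>
      rw [Finset.prod_Icc_succ_top (Nat.le_add_left 1 t), ih, Finset.prod_range_succ]

private lemma TD_mem_span_newton (u : ℕ → K) :
    ∀ (M : ℕ) (q : Polynomial K), q.natDegree ≤ M →
      q ∈ Submodule.span K
        {x : Polynomial K | ∃ m ≤ M, x = ∏ h ∈ Finset.range m, (X - C (u h))} := by
  intro M
  induction M with
  | zero =>
      intro q hq
      rw [Polynomial.eq_C_of_natDegree_le_zero hq, ← mul_one (C (q.coeff 0)),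
        ← Polynomial.smul_eq_C_mul]
      exact Submodule.smul_mem _ _ (Submodule.subset_span ⟨0, le_refl 0, by simp⟩)
  | succ M ih =>
      intro q hq
      set N : Polynomial K := ∏ h ∈ Finset.range (M + 1), (X - C (u h)) with hN
      have hNm : N.Monic := monic_prod_of_monic _ _ fun h _ => monic_X_sub_C _
      have hNdeg : N.natDegree = M + 1 := by
        rw [hN, Polynomial.natDegree_prod_of_monic _ _ fun h _ => monic_X_sub_C _]
        simp
      have hq' : (q - q.coeff (M + 1) • N).natDegree ≤ M := by
        rw [Polynomial.natDegree_le_iff_coeff_eq_zero]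
        intro m hm
        rw [Polynomial.coeff_sub, Polynomial.coeff_smul, smul_eq_mul]
        rcases eq_or_lt_of_le (Nat.succ_le_of_lt hm) with h | h
        · have h' : m = M + 1 := by omega
          subst h'
          rw [← hNdeg, hNm.coeff_natDegree, mul_one, sub_self]
        · have h1 : q.coeff m = 0 :=
            Polynomial.coeff_eq_zero_of_natDegree_lt (lt_of_le_of_lt hq h)
          have h2 : N.coeff m = 0 :=
            Polynomial.coeff_eq_zero_of_natDegree_lt (by rw [hNdeg]; omega)
          rw [h1, h2, mul_zero, sub_self]
      have hsub : {x : Polynomial K | ∃ m ≤ M, x = ∏ h ∈ Finset.range m, (X - C (u h))} ⊆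
          {x : Polynomial K | ∃ m ≤ M + 1, x = ∏ h ∈ Finset.range m, (X - C (u h))} := by
        rintro x ⟨m, hm, rfl⟩; exact ⟨m, le_trans hm (Nat.le_succ _), rfl⟩
      have h1 := Submodule.span_mono hsub (ih _ hq')
      have h2 : N ∈ Submodule.span K
          {x : Polynomial K | ∃ m ≤ M + 1, x = ∏ h ∈ Finset.range m, (X - C (u h))} :=
        Submodule.subset_span ⟨M + 1, le_refl _, rfl⟩
      have : q = (q - q.coeff (M + 1) • N) + q.coeff (M + 1) • N := by ring
      rw [this]
      exact Submodule.add_mem _ h1 (Submodule.smul_mem _ _ h2)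

/-- Lemma 10.1: a congruence between `Eᵢ ⊗ τ*_t(A*) ⊗ E_{i+t}` and
`Eᵢ ⊗ E*₀ ⊗ E_{i+t}` modulo `R + Σ_{n>t} D ⊗ Kτ*_n(A*) ⊗ D`. -/
theorem tauStar_vs_Estar0
    [FiniteDimensional K V] (hV : 0 < Module.finrank K V) (S : TDSystem K V)
    (t i : ℕ) (ht : t ≤ S.d) (hi : i ≤ S.d - t) :
    (S.Eelt (i : ℕ)) ⊗ₜ[K] (S.tauStarA t) ⊗ₜ[K] (S.Eelt ((i + t : ℕ))) -
      (∏ h ∈ Finset.Icc 1 t, (S.θstar 0 - S.θstar (h : ℕ))) •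
        ((S.Eelt (i : ℕ)) ⊗ₜ[K] (S.EstarElt 0) ⊗ₜ[K] (S.Eelt ((i + t : ℕ))))
      ∈ S.Rspace ⊔ ⨆ n ∈ Finset.Icc (t+1) S.d, S.middleSub n := by
  classical
  have hit : i + t ≤ S.d := by omega
  have hval : ∀ m : ℕ, m ≤ S.d → ((m : Fin (S.d+1)) : ℕ) = m :=
    fun m hm => Fin.val_cast_of_lt (by omega)
  have hne : ∀ m : ℕ, 1 ≤ m → m ≤ S.d → S.θstar 0 - S.θstar (m : ℕ) ≠ 0 := by
    intro m h1 h2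
    refine sub_ne_zero_of_ne fun h => ?_
    have h' := congrArg Fin.val (S.thetastar_inj h)
    rw [Fin.val_zero, hval m h2] at h'
    omega
  set c : K := ∏ h ∈ Finset.Icc 1 t, (S.θstar 0 - S.θstar (h : ℕ)) with hc
  set β : K := ∏ h ∈ Finset.range (S.d - t), (S.θstar 0 - S.θstar ((t + h + 1 : ℕ))) with hβ
  set c' : K := ∏ h ∈ Finset.range S.d, (S.θstar 0 - S.θstar ((h + 1 : ℕ))) with hc'
  set W : Polynomial K := ∏ h ∈ Finset.range t, (X - C (S.θstar ((h + 1 : ℕ)))) with hW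
  set Y : Polynomial K := ∏ h ∈ Finset.range (t - 1), (X - C (S.θstar ((h + 1 : ℕ)))) with hY
  set U : Polynomial K :=
    ∏ h ∈ Finset.range (S.d - t), (X - C (S.θstar ((t + h + 1 : ℕ)))) with hU
  set P : Polynomial K := ∏ h ∈ Finset.range S.d, (X - C (S.θstar ((h + 1 : ℕ)))) with hP
  have hcne : c ≠ 0 := by
    rw [hc]
    refine Finset.prod_ne_zero_iff.mpr fun h hh => ?_
    have := Finset.mem_Icc.mp hh
    exact hne h this.1 (le_trans this.2 ht)
  have hβne : β ≠ 0 := by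
    rw [hβ]
    refine Finset.prod_ne_zero_iff.mpr fun h hh => ?_
    have := Finset.mem_range.mp hh
    exact hne (t + h + 1) (by omega) (by omega)
  have hdd : Finset.range S.d = Finset.range (t + (S.d - t)) := by congr 1; omega
  have hc'β : c' = c * β := by
    rw [hc', hdd, Finset.prod_range_add, hβ]
    congr 1
    rw [hc, TD_prod_Icc_one]
  have hc'ne : c' ≠ 0 := by rw [hc'β]; exact mul_ne_zero hcne hβne
  have hPWU : P = W * U := by rw [hP, hdd, Finset.prod_range_add]
  have hτ1 : S.tauStar (t + 1) = W * (X - C (S.θstar 0)) := by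
    have h0 : S.tauStar (t + 1) =
        ∏ h ∈ Finset.range (t + 1), (X - C (S.θstar (h : ℕ))) := rfl
    rw [h0, Finset.prod_range_succ', hW]
    norm_num
  -- low-degree part identity
  have hlow : S.tauStar t - W = C (S.θstar ((t : ℕ)) - S.θstar 0) * Y := by
    rcases Nat.eq_zero_or_pos t with rfl | ht1
    · have h0 : S.tauStar 0 = 1 := Finset.prod_range_zero _
      rw [h0, hW, hY, Finset.prod_range_zero]
      norm_num
    · have hrt : Finset.range t = Finset.range ((t - 1) + 1) := by congr 1; omega
      have hτt : S.tauStar t = Y * (X - C (S.θstar 0)) := by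
        have h0 : S.tauStar t = ∏ h ∈ Finset.range t, (X - C (S.θstar (h : ℕ))) := rfl
        rw [h0, hrt, Finset.prod_range_succ', hY]
        norm_num
      have hWt : W = Y * (X - C (S.θstar ((t : ℕ)))) := by
        rw [hW, hrt, Finset.prod_range_succ, hY,
          show t - 1 + 1 = t from by omega]
      rw [hτt, hWt, map_sub]
      ring
  -- the quotient polynomial
  have hUeval : Polynomial.eval (S.θstar 0) U = β := by
    rw [hU, hβ, Polynomial.eval_prod]
    simp
  set q1 : Polynomial K := 1 - C β⁻¹ * U with hq1
  have hq1eval : q1.eval (S.θstar 0) = 0 := by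
    rw [hq1]
    simp [hUeval, inv_mul_cancel₀ hβne]
  obtain ⟨gq, hgq⟩ := Polynomial.dvd_iff_isRoot.mpr hq1eval
  have hWq1 : W * q1 = S.tauStar (t + 1) * gq := by rw [hτ1, hgq]; ring
  -- key polynomial identity
  have hkey : S.tauStar t - C (c * c'⁻¹) * P
      = C (S.θstar ((t : ℕ)) - S.θstar 0) * Y + S.tauStar (t + 1) * gq := by
    have hccβ : c * c'⁻¹ = β⁻¹ := by
      rw [hc'β, mul_inv, ← mul_assoc, mul_inv_cancel₀ hcne, one_mul]
    rw [hccβ, hPWU, ← hlow, ← hWq1, hq1]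
    ring
  -- E*₀ as a polynomial in A*
  have hPeval0 : P.eval (S.θstar 0) = c' := by
    rw [hP, hc', Polynomial.eval_prod]
    simp
  have hE0 : S.EstarElt 0 = Polynomial.aeval S.astar (C c'⁻¹ * P) := by
    apply Subtype.ext
    rw [Polynomial.aeval_subalgebra_coe]
    have hloc : ∀ j : Fin (S.d+1), S.Astar.eigenspace (S.θstar j) ≤
        LinearMap.eqLocus (S.Estar 0) (Polynomial.aeval S.Astar (C c'⁻¹ * P)) := by
      intro j v hv
      refine LinearMap.mem_eqLocus.mpr ?_
      have hev := TD_aeval_apply_mem_eigenspace hv (C c'⁻¹ * P)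
      rcases eq_or_ne j 0 with rfl | hj
      · rw [S.Estar_on_eig 0 v hv, hev]
        simp [hPeval0, inv_mul_cancel₀ hc'ne]
      · rw [S.Estar_off_eig 0 j hj v hv, hev]
        have hj1 : 1 ≤ (j : ℕ) := by
          rcases Nat.eq_zero_or_pos (j : ℕ) with h0 | h
          · exact absurd (Fin.ext (by rw [h0, Fin.val_zero])) hj
          · exact h
        have hPj : P.eval (S.θstar j) = 0 := by
          rw [hP, Polynomial.eval_prod]
          refine Finset.prod_eq_zero (i := (j : ℕ) - 1)
            (Finset.mem_range.mpr (by omega)) ?_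
          rw [show (j : ℕ) - 1 + 1 = (j : ℕ) from by omega, Fin.cast_val_eq_self]
          simp
        simp [hPj]
    have hsup := iSup_le hloc
    rw [S.sup_eigstar] at hsup
    exact LinearMap.ext fun v => hsup Submodule.mem_top
  have hcE0 : c • S.EstarElt 0 = Polynomial.aeval S.astar (C (c * c'⁻¹) * P) := by
    rw [hE0, show C (c * c'⁻¹) * P = C c * (C c'⁻¹ * P) from by rw [C_mul]; ring]
    simp only [map_mul, Polynomial.aeval_C, ← Algebra.smul_def]
  -- the identity in D*
  have hDstar : S.tauStarA t - c • S.EstarElt 0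
      = (S.θstar ((t : ℕ)) - S.θstar 0) • Polynomial.aeval S.astar Y
        + Polynomial.aeval S.astar (S.tauStar (t + 1) * gq) := by
    rw [hcE0, show S.tauStarA t = Polynomial.aeval S.astar (S.tauStar t) from rfl,
      ← map_sub, hkey, map_add, map_mul, Polynomial.aeval_C, ← Algebra.smul_def]
  have hDstar' : S.tauStarA t
      = ((S.θstar ((t : ℕ)) - S.θstar 0) • Polynomial.aeval S.astar Y
        + Polynomial.aeval S.astar (S.tauStar (t + 1) * gq)) + c • S.EstarElt 0 :=
    sub_eq_iff_eq_add.mp hDstar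
  have hsplit : (S.Eelt (i : ℕ)) ⊗ₜ[K] (S.tauStarA t) ⊗ₜ[K] (S.Eelt ((i + t : ℕ))) -
      c • ((S.Eelt (i : ℕ)) ⊗ₜ[K] (S.EstarElt 0) ⊗ₜ[K] (S.Eelt ((i + t : ℕ))))
      = (S.θstar ((t : ℕ)) - S.θstar 0) •
          ((S.Eelt (i : ℕ)) ⊗ₜ[K] (Polynomial.aeval S.astar Y) ⊗ₜ[K] (S.Eelt ((i + t : ℕ))))
        + (S.Eelt (i : ℕ)) ⊗ₜ[K] (Polynomial.aeval S.astar (S.tauStar (t + 1) * gq)) ⊗ₜ[K]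
            (S.Eelt ((i + t : ℕ))) := by
    conv_lhs => rw [hDstar']
    simp only [TensorProduct.add_tmul, TensorProduct.tmul_add, ← TensorProduct.smul_tmul',
      TensorProduct.tmul_smul]
    abel
  rw [hsplit]
  apply Submodule.add_mem
  · -- low part, lands in Mspace ⊆ Rspace
    rcases Nat.eq_zero_or_pos t with rfl | ht1
    · rw [Nat.cast_zero, sub_self, zero_smul]
      exact zero_mem _
    · apply Submodule.smul_mem
      refine (le_sup_left : S.Rspace ≤ _) ((le_sup_right : S.Mspace ≤ S.Rspace) ?_)
      have hYdeg : Y.natDegree ≤ t - 1 := by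
        rw [hY]
        refine le_trans (Polynomial.natDegree_prod_le _ _) ?_
        simp
      rw [Polynomial.aeval_eq_sum_range, TD_tmul_sum_mid]
      refine Submodule.sum_mem _ fun s hs => ?_
      have hs' : s ≤ t - 1 := le_trans (Nat.lt_succ_iff.mp (Finset.mem_range.mp hs)) hYdeg
      rw [TD_tmul_smul_mid]
      refine Submodule.smul_mem _ _ (Submodule.subset_span ?_)
      refine ⟨((i : ℕ) : Fin (S.d+1)), (((i + t : ℕ)) : Fin (S.d+1)), s, by omega, ?_, rfl⟩
      rw [hval i (by omega), hval (i + t) hit]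
      have hdist : Nat.dist i (i + t) = t := by simp [Nat.dist]
      omega
  · -- high part, lands in the iSup
    refine (le_sup_right : _ ≤ S.Rspace ⊔ ⨆ n ∈ Finset.Icc (t+1) S.d, S.middleSub n) ?_
    rcases eq_or_lt_of_le ht with htd | htd
    · -- t = d, the quotient is zero
      have hU1 : U = 1 := by rw [hU, show S.d - t = 0 from by omega, Finset.prod_range_zero]
      have hβ1 : β = 1 := by rw [hβ, show S.d - t = 0 from by omega, Finset.prod_range_zero]
      have hq10 : q1 = 0 := by rw [hq1, hU1, hβ1]; simp
      have hgq0 : gq = 0 := by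
        rcases mul_eq_zero.mp (hq10 ▸ hgq).symm with h | h
        · exact absurd h (Polynomial.X_sub_C_ne_zero _)
        · exact h
      rw [hgq0, mul_zero, map_zero, TD_tmul_zero_mid]
      exact zero_mem _
    · have hgdeg : gq.natDegree ≤ S.d - t - 1 := by
        rcases eq_or_ne gq 0 with rfl | hg0
        · simp
        · have hdeg1 : q1.natDegree = gq.natDegree + 1 := by
            rw [hgq, Polynomial.natDegree_mul (Polynomial.X_sub_C_ne_zero _) hg0,
              Polynomial.natDegree_X_sub_C]
            omega
          have hUdeg : U.natDegree ≤ S.d - t := by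
            rw [hU]
            refine le_trans (Polynomial.natDegree_prod_le _ _) ?_
            simp
          have hq1deg : q1.natDegree ≤ S.d - t := by
            rw [hq1]
            refine le_trans (Polynomial.natDegree_sub_le _ _) ?_
            simp only [Polynomial.natDegree_one, max_le_iff]
            exact ⟨by omega, le_trans (Polynomial.natDegree_C_mul_le _ _) hUdeg⟩
          omega
      have hspan := TD_mem_span_newton (fun h => S.θstar ((t + 1 + h : ℕ))) (S.d - t - 1)
        gq hgdeg
      have hgen : ∀ x ∈ Submodule.span K {x : Polynomial K | ∃ m ≤ S.d - t - 1,
            x = ∏ h ∈ Finset.range m, (X - C (S.θstar ((t + 1 + h : ℕ))))},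
          (S.Eelt (i : ℕ)) ⊗ₜ[K] (Polynomial.aeval S.astar (S.tauStar (t + 1) * x)) ⊗ₜ[K]
            (S.Eelt ((i + t : ℕ))) ∈ ⨆ n ∈ Finset.Icc (t+1) S.d, S.middleSub n := by
        intro x hx
        induction hx using Submodule.span_induction with
        | mem x hx' =>
            obtain ⟨m, hm, rfl⟩ := hx'
            have hprod : S.tauStar (t + 1)
                * (∏ h ∈ Finset.range m, (X - C (S.θstar ((t + 1 + h : ℕ))))) =
                S.tauStar (t + 1 + m) := by
              have h0 : S.tauStar (t + 1 + m) =
                  ∏ h ∈ Finset.range (t + 1 + m), (X - C (S.θstar (h : ℕ))) := rfl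
              rw [h0, Finset.prod_range_add]
              rfl
            rw [hprod]
            refine Submodule.mem_iSup_of_mem (t + 1 + m) ?_
            refine Submodule.mem_iSup_of_mem (Finset.mem_Icc.mpr ⟨by omega, by omega⟩) ?_
            exact Submodule.subset_span ⟨_, _, rfl⟩
        | zero =>
            rw [mul_zero, map_zero, TD_tmul_zero_mid]
            exact zero_mem _
        | add x y hx hy hx' hy' =>
            rw [mul_add, map_add, TD_tmul_add_mid]
            exact Submodule.add_mem _ hx' hy'
        | smul r x hx hx' =>
            rw [mul_smul_comm, map_smul, TD_tmul_smul_mid]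
            exact Submodule.smul_mem _ _ hx'
      exact hgen gq hspan

end
end
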